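/- Let g = x^{k_1} + x^{k_2} + x^{k_3} + x^{k_4} ∈ ℕ[x^{±1}] with k_1 > k_2 > k_3 > k_4 and k_1 − k_2 ≠ k_3 − k_4. Then g is irreducible in ℕ[x^{±1}]. -/

import Mathlib

/-!
Summing the coefficients is a ring homomorphism `ℕ[x^{±1}] → ℕ`; it sends the four-term
polynomial `F` to `4` and every unit to `1`. In a factorization `F = g * h` into nonunits both
factors therefore have coefficient sum `2`, i.e. are binomials `x^a + x^b` and `x^c + x^d`.
Coefficients are nonnegative, so nothing cancels in the product and the exponent set
`{k₁, k₂, k₃, k₄}` equals the sumset `{a, b} + {c, d}`, which forces `k₁ - k₂ = k₃ - k₄`.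
-/

/-- The semiring of Laurent polynomials with nonnegative integer coefficients, ℕ[x^{±1}]. -/
abbrev NL : Type := AddMonoidAlgebra ℕ ℤ

/-- The monomial `c • x^k` in ℕ[x^{±1}]. -/
noncomputable def mono (k : ℤ) (c : ℕ) : NL := AddMonoidAlgebra.single k c

/-- Evaluation at 1, i.e. the sum of the coefficients. -/
def evalOne (f : NL) : ℕ := f.coeff.sum fun _ c => c

/-- A monomial is `c x^k` with `c ≥ 1`. -/
def IsMonomial (f : NL) : Prop := ∃ (c : ℕ) (k : ℤ), 0 < c ∧ f = mono k c

/-- A nonzero `f` is monolithic if any factorization has a monomial factor. -/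
def Monolithic (f : NL) : Prop :=
  f ≠ 0 ∧ ∀ g h : NL, f = g * h → IsMonomial g ∨ IsMonomial h

/-- `f` is hyper-monolithic: it has ≥ 2 terms, written with positive coefficients and
strictly decreasing exponents `k 0 > ⋯ > k n`, and either the first gap is strictly
smaller than every later gap, or the last gap is strictly smaller than every earlier gap. -/
def HyperMonolithic (f : NL) : Prop :=
  ∃ (n : ℕ) (k : ℕ → ℤ) (c : ℕ → ℕ),
    1 ≤ n ∧ (∀ i j, i < j → j ≤ n → k j < k i) ∧ (∀ i, i ≤ n → 0 < c i) ∧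
    f = ∑ i ∈ Finset.range (n + 1), mono (k i) (c i) ∧
    ((∀ i, 1 ≤ i → i + 1 ≤ n → k 0 - k 1 < k i - k (i + 1)) ∨
     (∀ j, j + 2 ≤ n → k (n - 1) - k n < k j - k (j + 1)))

open AddMonoidAlgebra

theorem evalOne_eq_lift (f : NL) : evalOne f = lift ℕ ℕ ℤ 1 f := by
  simp [evalOne, lift_apply]

theorem evalOne_add (f g : NL) : evalOne (f + g) = evalOne f + evalOne g := by
  simp only [evalOne_eq_lift, map_add]

theorem evalOne_mul (f g : NL) : evalOne (f * g) = evalOne f * evalOne g := by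
  simp only [evalOne_eq_lift, map_mul]

theorem evalOne_mono (k : ℤ) (c : ℕ) : evalOne (mono k c) = c := by
  rw [evalOne_eq_lift, mono, lift_single, MonoidHom.one_apply, smul_eq_mul, mul_one]

theorem evalOne_eq_one_of_isUnit {u : NL} (hu : IsUnit u) : evalOne u = 1 := by
  rw [evalOne_eq_lift]
  exact Nat.isUnit_iff.mp (hu.map _)

theorem coeff_mono (k : ℤ) (c : ℕ) : (mono k c).coeff = Finsupp.single k c :=
  coeff_single k c

theorem mono_mul_mono (a b : ℤ) (m n : ℕ) : mono a m * mono b n = mono (a + b) (m * n) :=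
  single_mul_single _ _ _ _

theorem isUnit_mono_one (k : ℤ) : IsUnit (mono k 1) :=
  .of_mul_eq_one (mono (-k) 1) (by rw [mono_mul_mono, add_neg_cancel, mul_one]; rfl)

theorem eq_sum_mono_toMultiset (f : NL) :
    f = ((Finsupp.toMultiset f.coeff).map (mono · 1)).sum := by
  suffices ∀ s : Multiset ℤ, (s.map (mono · 1)).sum = ofCoeff (Multiset.toFinsupp s) by
    rw [this, Finsupp.toMultiset_toFinsupp]
  intro s
  induction s using Multiset.induction_on with
  | empty => rfl
  | cons a s ih =>
    rw [Multiset.map_cons, Multiset.sum_cons, ih, ← Multiset.singleton_add,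
      Multiset.toFinsupp_add, Multiset.toFinsupp_singleton]
    rfl

theorem card_toMultiset_coeff (f : NL) : Multiset.card (Finsupp.toMultiset f.coeff) = evalOne f :=
  Finsupp.card_toMultiset _

theorem exists_eq_mono_of_evalOne_eq_one {f : NL} (hf : evalOne f = 1) : ∃ k, f = mono k 1 := by
  obtain ⟨k, hk⟩ := Multiset.card_eq_one.mp ((card_toMultiset_coeff f).trans hf)
  exact ⟨k, by rw [eq_sum_mono_toMultiset f, hk]; simp⟩

theorem exists_eq_binomial_of_evalOne_eq_two {f : NL} (hf : evalOne f = 2) :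
    ∃ a b, b ≤ a ∧ f = mono a 1 + mono b 1 := by
  obtain ⟨a, b, hab⟩ := Multiset.card_eq_two.mp ((card_toMultiset_coeff f).trans hf)
  rw [eq_sum_mono_toMultiset f, hab]
  rcases le_total b a with h | h
  · exact ⟨a, b, h, by simp⟩
  · exact ⟨b, a, h, by simp [add_comm]⟩

theorem support_coeff_add (f g : NL) :
    (f + g).coeff.support = f.coeff.support ∪ g.coeff.support :=
  Finsupp.support_add_eq_union

theorem support_coeff_mono_one (k : ℤ) : (mono k 1).coeff.support = {k} := by
  rw [coeff_mono, Finsupp.support_single _ one_ne_zero]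

theorem support_coeff_mono_one_add_four (p q r s : ℤ) :
    (mono p 1 + mono q 1 + mono r 1 + mono s 1).coeff.support = {p, q, r, s} := by
  ext x
  simp only [support_coeff_add, support_coeff_mono_one, Finset.mem_union, Finset.mem_insert,
    Finset.mem_singleton, or_assoc]

theorem binomial_mul_binomial (a b c d : ℤ) :
    (mono a 1 + mono b 1) * (mono c 1 + mono d 1) =
      mono (a + c) 1 + mono (a + d) 1 + mono (b + c) 1 + mono (b + d) 1 := by
  simp only [add_mul, mul_add, mono_mul_mono, mul_one]
  abel

theorem sub_eq_sub_of_sumset_eq {a b c d k₁ k₂ k₃ k₄ : ℤ} (hab : b ≤ a) (hcd : d ≤ c)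
    (h12 : k₂ < k₁) (h23 : k₃ < k₂) (h34 : k₄ < k₃)
    (h : ({a + c, a + d, b + c, b + d} : Finset ℤ) = {k₁, k₂, k₃, k₄}) :
    k₁ - k₂ = k₃ - k₄ := by
  -- The extreme sums are `k₁` and `k₄`, so the middle sums `a + d`, `b + c` are `k₂`, `k₃` in
  -- some order; either order gives the claim.
  have mem (x : ℤ) := Finset.ext_iff.mp h x
  simp only [Finset.mem_insert, Finset.mem_singleton] at mem
  have top : a + c = k₁ := by have := mem k₁; have := mem (a + c); omega
  have bot : b + d = k₄ := by have := mem k₄; have := mem (b + d); omega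
  have := mem k₂; have := mem k₃; have := mem (a + d); have := mem (b + c)
  omega

/-- A four-term polynomial with all coefficients 1 and `k₁ − k₂ ≠ k₃ − k₄` is irreducible. -/
theorem stmt13 (k₁ k₂ k₃ k₄ : ℤ) (h12 : k₂ < k₁) (h23 : k₃ < k₂) (h34 : k₄ < k₃)
    (hne : k₁ - k₂ ≠ k₃ - k₄) :
    Irreducible (mono k₁ 1 + mono k₂ 1 + mono k₃ 1 + mono k₄ 1) := by
  set F := mono k₁ 1 + mono k₂ 1 + mono k₃ 1 + mono k₄ 1
  have hF4 : evalOne F = 4 := by simp only [F, evalOne_add, evalOne_mono]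
  refine ⟨fun hu => by simp [evalOne_eq_one_of_isUnit hu] at hF4, fun g h hgh => ?_⟩
  have hgh4 : evalOne g * evalOne h = 4 := by rw [← evalOne_mul, ← hgh, hF4]
  have hcases : evalOne g = 1 ∨ evalOne h = 1 ∨ (evalOne g = 2 ∧ evalOne h = 2) := by
    have : evalOne g ≤ 4 := Nat.le_of_dvd (by norm_num) (Dvd.intro _ hgh4)
    interval_cases evalOne g <;> omega
  rcases hcases with hg | hh | ⟨hg, hh⟩
  · obtain ⟨k, rfl⟩ := exists_eq_mono_of_evalOne_eq_one hg
    exact .inl (isUnit_mono_one k)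
  · obtain ⟨k, rfl⟩ := exists_eq_mono_of_evalOne_eq_one hh
    exact .inr (isUnit_mono_one k)
  obtain ⟨a, b, hab, rfl⟩ := exists_eq_binomial_of_evalOne_eq_two hg
  obtain ⟨c, d, hcd, rfl⟩ := exists_eq_binomial_of_evalOne_eq_two hh
  rw [binomial_mul_binomial] at hgh
  have hsupp := congrArg (·.coeff.support) hgh
  simp only [F, support_coeff_mono_one_add_four] at hsupp
  exact absurd (sub_eq_sub_of_sumset_eq hab hcd h12 h23 h34 hsupp.symm) hne
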